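/- Let n ≥ 2, 1 ≤ p ≤ n−1 and 1 ≤ k ≤ n−p be integers. Define the list a = [n−k, n−k−1, …, n−k−p+1] ++ [n−p, n−p−1, …, 1] of length n, and let L = a ++ (−reverse a), i.e. L = [a₁, …, aₙ, −aₙ, …, −a₁]. Then the maximum length of a strictly decreasing subsequence of L equals 2(n − min(k, p)). -/

import Mathlib

/-- The set of lengths of strictly decreasing subsequences (sublists) of `L`. -/
def ldsSet (L : List ℤ) : Set ℕ :=
  {m | ∃ s : List ℤ, s.Sublist L ∧ s.Chain' (· > ·) ∧ s.length = m}

/-- The list `[−aₙ, −a_{n−1}, …, −a₁]` obtained from `a = [a₁, …, aₙ]`. -/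
def negRev (a : List ℤ) : List ℤ := (a.map (fun x => -x)).reverse

lemma negRev_sublist {s a : List ℤ} (h : s.Sublist a) : (negRev s).Sublist (negRev a) :=
  (h.map _).reverse

lemma negRev_chain' {s : List ℤ} (h : s.Chain' (· > ·)) : (negRev s).Chain' (· > ·) := by
  unfold List.Chain' at h ⊢
  rw [negRev, List.isChain_reverse, List.isChain_map]
  exact h.imp (fun a b hab => by simp only [flip, gt_iff_lt] at hab ⊢; omega)

lemma mem_negRev {x : ℤ} {a : List ℤ} : x ∈ negRev a ↔ -x ∈ a := by
  simp only [negRev, List.mem_reverse, List.mem_map]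
  constructor
  · rintro ⟨y, hy, rfl⟩; simpa using hy
  · intro h; exact ⟨-x, h, by ring⟩

lemma chain'_map_range {h : ℕ → ℤ} {N : ℕ} (H : ∀ i, i + 1 < N → h i > h (i + 1)) :
    List.Chain' (· > ·) ((List.range N).map h) := by
  unfold List.Chain'
  rw [List.isChain_map]
  cases N with
  | zero => simp
  | succ N => rw [List.isChain_range_succ]; intro m hm; exact H m (by omega)

/-- A strictly decreasing list of integers with entries in `[lo, hi]` has length at most
the cardinality of `[lo, hi]`. -/
lemma length_le_of_chain' {l : List ℤ} (hl : l.Chain' (· > ·)) {lo hi : ℤ}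
    (hmem : ∀ x ∈ l, lo ≤ x ∧ x ≤ hi) : l.length ≤ (hi + 1 - lo).toNat := by
  have hnd : l.Nodup := (List.isChain_iff_pairwise.mp hl).imp (fun h => ne_of_gt h)
  have hsub : l.toFinset ⊆ Finset.Icc lo hi := by
    intro x hx
    rw [List.mem_toFinset] at hx
    exact Finset.mem_Icc.mpr (hmem x hx)
  have := Finset.card_le_card hsub
  rwa [List.toFinset_card_of_nodup hnd, Int.card_Icc] at this

/-- Let `n ≥ 2`, `1 ≤ p ≤ n−1`, `1 ≤ k ≤ n−p`. With
`a = [n−k, n−k−1, …, n−k−p+1] ++ [n−p, n−p−1, …, 1]` and `L = a ++ (−reverse a)`,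
the maximum length of a strictly decreasing subsequence of `L` is
`2(n − min(k, p))`. -/
theorem statement9 (n p k : ℕ) (hn : 2 ≤ n) (hp1 : 1 ≤ p) (hp2 : p ≤ n - 1)
    (hk1 : 1 ≤ k) (hk2 : k ≤ n - p) :
    IsGreatest (ldsSet
      (((List.range p).map (fun i => (n : ℤ) - (k : ℤ) - (i : ℤ)) ++
        (List.range (n - p)).map (fun i => (n : ℤ) - (p : ℤ) - (i : ℤ))) ++
       negRev ((List.range p).map (fun i => (n : ℤ) - (k : ℤ) - (i : ℤ)) ++
        (List.range (n - p)).map (fun i => (n : ℤ) - (p : ℤ) - (i : ℤ)))))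
      (2 * (n - min k p)) := by
  have eq1 : ((List.range p).map (fun i => (n : ℤ) - (k : ℤ) - (i : ℤ)))
      = (List.range p).map (fun i : ℕ => (n : ℤ) - (k : ℤ) - (i : ℤ)) := by
    simp only [bind_pure_comp, List.map_eq_map, List.map_map]; rfl
  have eq2 : ((List.range (n - p)).map (fun i => (n : ℤ) - (p : ℤ) - (i : ℤ)))
      = (List.range (n - p)).map (fun i : ℕ => (n : ℤ) - (p : ℤ) - (i : ℤ)) := by
    simp only [bind_pure_comp, List.map_eq_map, List.map_map]; rfl
  rw [eq1, eq2]
  set f : ℕ → ℤ := fun i => (n : ℤ) - (k : ℤ) - (i : ℤ) with hf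
  set g : ℕ → ℤ := fun i => (n : ℤ) - (p : ℤ) - (i : ℤ) with hg
  set A : List ℤ := (List.range p).map f ++ (List.range (n - p)).map g with hA
  set M : ℕ := n - min k p with hM
  -- basic membership fact about A
  have memA : ∀ x ∈ A, 1 ≤ x ∧ x ≤ (M : ℤ) := by
    intro x hx
    rw [hA, List.mem_append, List.mem_map, List.mem_map] at hx
    rcases hx with ⟨i, hi, rfl⟩ | ⟨i, hi, rfl⟩ <;>
      · rw [List.mem_range] at hi
        simp only [hf, hg, hM]
        omega
  constructor
  · -- membership: exhibit a witness
    set s : List ℤ := (List.range M).map (fun i : ℕ => (M : ℤ) - (i : ℤ)) with hs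
    have hsA : s.Sublist A := by
      rcases le_or_gt k p with hkp | hkp
      · -- M = n - k, split s as first block ++ rest
        have hsplit : M = p + (n - k - p) := by omega
        rw [hs, hsplit, List.range_add, List.map_append, List.map_map]
        have h1 : (List.range p).map (fun i : ℕ => ((p + (n - k - p) : ℕ) : ℤ) - (i : ℤ))
            = (List.range p).map f := by
          apply List.map_congr_left
          intro i hi
          rw [List.mem_range] at hi
          simp only [hf]; push_cast; omega
        have h2 : (List.range (n - k - p)).map
              ((fun i : ℕ => ((p + (n - k - p) : ℕ) : ℤ) - (i : ℤ)) ∘ (fun x => p + x))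
            = (List.range (n - k - p)).map (g ∘ (fun x => k + x)) := by
          apply List.map_congr_left
          intro i hi
          rw [List.mem_range] at hi
          simp only [Function.comp, hg]; push_cast; omega
        rw [h1, h2, hA]
        apply List.Sublist.append (List.Sublist.refl _)
        have hsplit2 : n - p = k + (n - k - p) := by omega
        rw [hsplit2, List.range_add, List.map_append, List.map_map]
        exact List.sublist_append_right _ _
      · -- M = n - p, s is exactly the second block
        have hMp : M = n - p := by omega
        have hseq : s = (List.range (n - p)).map g := by
          rw [hs, hMp]
          apply List.map_congr_left
          intro i hi
          rw [List.mem_range] at hi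
          simp only [hg]; push_cast; omega
        rw [hseq, hA]
        exact List.sublist_append_right _ _
    have mems : ∀ x ∈ s, 1 ≤ x := by
      intro x hx
      rw [hs, List.mem_map] at hx
      obtain ⟨i, hi, rfl⟩ := hx
      rw [List.mem_range] at hi
      omega
    have hchain : s.Chain' (· > ·) := by
      rw [hs]
      apply chain'_map_range
      intro i _
      push_cast
      omega
    refine ⟨s ++ negRev s, List.Sublist.append hsA (negRev_sublist hsA), ?_, ?_⟩
    · apply hchain.append (negRev_chain' hchain)
      intro x hx y hy
      have hx' : (1 : ℤ) ≤ x := mems x (List.mem_of_mem_getLast? hx)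
      have hy' : y ∈ negRev s := List.mem_of_mem_head? hy
      rw [mem_negRev] at hy'
      have := mems _ hy'
      omega
    · rw [List.length_append, hs]
      simp only [negRev, List.length_reverse, List.length_map, List.length_range]
      omega
  · -- upper bound
    rintro m ⟨s, hsub, hchain, rfl⟩
    rw [List.sublist_append_iff] at hsub
    obtain ⟨s₁, s₂, rfl, h₁, h₂⟩ := hsub
    obtain ⟨hc₁, hc₂, -⟩ := List.isChain_append.mp hchain
    have hb₁ : s₁.length ≤ M := by
      have := length_le_of_chain' hc₁ (lo := 1) (hi := (M : ℤ))
        (fun x hx => memA x (h₁.subset hx))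
      omega
    have hb₂ : s₂.length ≤ M := by
      have := length_le_of_chain' hc₂ (lo := -(M : ℤ)) (hi := -1)
        (fun x hx => by
          have := memA (-x) (mem_negRev.mp (h₂.subset hx))
          omega)
      omega
    rw [List.length_append]
    omega
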